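/- For every finite simple graph G and every critical independent set S of G, there is a matching from N(S) into S, i.e., an injective function f : N(S) → S such that f(u) is adjacent to u for every u ∈ N(S). -/

import Mathlib

open Finset

namespace CritGraph

variable {V : Type*} [Fintype V] [DecidableEq V]

/-- The neighborhood of a set of vertices `X`:
all vertices having at least one neighbor in `X`. -/
def nbhd (G : SimpleGraph V) [DecidableRel G.Adj] (X : Finset V) : Finset V :=
  univ.filter fun v => ∃ x ∈ X, G.Adj v x

/-- The difference `d(X) = |X| - |N(X)|` of a set of vertices `X`. -/
def diff (G : SimpleGraph V) [DecidableRel G.Adj] (X : Finset V) : ℤ :=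
  (X.card : ℤ) - ((nbhd G X).card : ℤ)

/-- A set of vertices is independent if no two of its vertices are adjacent. -/
def IsIndep (G : SimpleGraph V) (S : Finset V) : Prop :=
  ∀ u ∈ S, ∀ v ∈ S, ¬ G.Adj u v

instance (G : SimpleGraph V) [DecidableRel G.Adj] : DecidablePred (IsIndep G) := fun S =>
  inferInstanceAs (Decidable (∀ u ∈ S, ∀ v ∈ S, ¬ G.Adj u v))

/-- The critical difference `d_c(G) = max {d(X) : X ⊆ V}`. -/
def dC (G : SimpleGraph V) [DecidableRel G.Adj] : ℤ :=
  (univ : Finset V).powerset.sup' (Finset.powerset_nonempty _) (diff G)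

/-- The critical independence difference `id_c(G) = max {d(I) : I independent}`. -/
def idC (G : SimpleGraph V) [DecidableRel G.Adj] : ℤ :=
  ((univ : Finset V).powerset.filter (IsIndep G)).sup'
    ⟨∅, by simp [IsIndep]⟩ (diff G)

/-- `A` is a critical independent set: `A` is independent and
`d(A) = max {d(I) : I independent}`. -/
def IsCritIndep (G : SimpleGraph V) [DecidableRel G.Adj] (A : Finset V) : Prop :=
  IsIndep G A ∧ ∀ I : Finset V, IsIndep G I → diff G I ≤ diff G A

instance (G : SimpleGraph V) [DecidableRel G.Adj] : DecidablePred (IsCritIndep G) := fun A =>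
  inferInstanceAs (Decidable (IsIndep G A ∧ ∀ I : Finset V, IsIndep G I → diff G I ≤ diff G A))

/-- `ker(G)`: the intersection of all critical independent sets of `G`. -/
def kerG (G : SimpleGraph V) [DecidableRel G.Adj] : Finset V :=
  univ.filter fun v => ∀ A : Finset V, IsCritIndep G A → v ∈ A

/-- `G - v`: the induced subgraph of `G` on `V \ {v}`. -/
def deleteVert (G : SimpleGraph V) (v : V) : SimpleGraph {u : V // u ≠ v} :=
  G.comap Subtype.val

instance (G : SimpleGraph V) (v : V) [DecidableRel G.Adj] :
    DecidableRel (deleteVert G v).Adj := fun a b =>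
  inferInstanceAs (Decidable (G.Adj a.val b.val))

/-- `S` is an inclusion-minimal independent set with positive difference. -/
def MinPosIndep (G : SimpleGraph V) [DecidableRel G.Adj] (S : Finset V) : Prop :=
  IsIndep G S ∧ 0 < diff G S ∧ ∀ S' ⊂ S, ¬ (IsIndep G S' ∧ 0 < diff G S')

/-- `S` is a maximum independent set. -/
def IsMaxIndep (G : SimpleGraph V) (S : Finset V) : Prop :=
  IsIndep G S ∧ ∀ I : Finset V, IsIndep G I → I.card ≤ S.card

instance (G : SimpleGraph V) [DecidableRel G.Adj] : DecidablePred (IsMaxIndep G) := fun S =>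
  inferInstanceAs (Decidable (IsIndep G S ∧ ∀ I : Finset V, IsIndep G I → I.card ≤ S.card))

/-- `core(G)`: the intersection of all maximum independent sets of `G`. -/
def coreG (G : SimpleGraph V) [DecidableRel G.Adj] : Finset V :=
  univ.filter fun v => ∀ A : Finset V, IsMaxIndep G A → v ∈ A

/-! By Hall's theorem it suffices that every `T ⊆ N(S)` has at least `|T|` neighbours in `S`.
Otherwise `S \ N(T)` is independent, loses fewer than `|T|` vertices of `S`, and has its
neighbourhood inside `N(S) \ T`, so its difference exceeds `d(S)`. -/

-- Codomain and domain coincide so that `id` can fill in the values outside `s`.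
theorem _root_.Finset.exists_injOn_of_forall_card_le_card_biUnion {α : Type*} [DecidableEq α]
    (s : Finset α) (t : α → Finset α) (hall : ∀ A ⊆ s, #A ≤ #(A.biUnion t)) :
    ∃ f : α → α, Set.InjOn f s ∧ ∀ a ∈ s, f a ∈ t a := by
  have hall' : ∀ A : Finset s, #A ≤ #(A.biUnion fun a => t a) := fun A => by
    simpa [image_biUnion, card_image_of_injective _ Subtype.val_injective] using
      hall (A.image Subtype.val) (image_subset_iff.mpr fun a _ => a.2)
  obtain ⟨f, hf_inj, hf_mem⟩ :=
    (Finset.all_card_le_biUnion_card_iff_exists_injective _).mp hall'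
  have hf_extend (a : s) : Function.extend Subtype.val f id a = f a :=
    Subtype.val_injective.extend_apply f id a
  refine ⟨Function.extend Subtype.val f id, ?_, fun a ha => ?_⟩
  · intro a ha b hb hab
    simpa [hf_extend ⟨a, ha⟩, hf_extend ⟨b, hb⟩, hf_inj.eq_iff] using hab
  · simpa [hf_extend ⟨a, ha⟩] using hf_mem ⟨a, ha⟩

omit [Fintype V] [DecidableEq V] in
theorem IsIndep.subset {G : SimpleGraph V} {S I : Finset V} (hS : IsIndep G S) (hIS : I ⊆ S) :
    IsIndep G I :=
  fun u hu v hv => hS u (hIS hu) v (hIS hv)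

omit [DecidableEq V] in
theorem mem_nbhd {G : SimpleGraph V} [DecidableRel G.Adj] {X : Finset V} {v : V} :
    v ∈ nbhd G X ↔ ∃ x ∈ X, G.Adj v x := by
  simp [nbhd]

theorem nbhd_sdiff_nbhd_subset (G : SimpleGraph V) [DecidableRel G.Adj] (S T : Finset V) :
    nbhd G (S \ nbhd G T) ⊆ nbhd G S \ T := by
  intro v hv
  obtain ⟨x, hx, hvx⟩ := mem_nbhd.mp hv
  rw [mem_sdiff] at hx ⊢
  exact ⟨mem_nbhd.mpr ⟨x, hx.1, hvx⟩, fun hvT => hx.2 (mem_nbhd.mpr ⟨v, hvT, hvx.symm⟩)⟩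

theorem IsCritIndep.card_le_card_inter_nbhd {G : SimpleGraph V} [DecidableRel G.Adj]
    {S T : Finset V} (hS : IsCritIndep G S) (hT : T ⊆ nbhd G S) :
    #T ≤ #(S ∩ nbhd G T) := by
  have hdiff : diff G (S \ nbhd G T) ≤ diff G S := hS.2 _ (hS.1.subset sdiff_subset)
  have hcard_sdiff : #(S \ nbhd G T) + #(S ∩ nbhd G T) = #S := card_sdiff_add_card_inter _ _
  have hcard_nbhd : #(nbhd G (S \ nbhd G T)) + #T ≤ #(nbhd G S) := by
    rw [← card_sdiff_add_card_eq_card hT]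
    exact Nat.add_le_add_right (card_le_card (nbhd_sdiff_nbhd_subset G S T)) _
  simp only [diff] at hdiff
  omega

theorem biUnion_filter_adj_eq_inter_nbhd (G : SimpleGraph V) [DecidableRel G.Adj]
    (S A : Finset V) : A.biUnion (fun u => S.filter (G.Adj u)) = S ∩ nbhd G A := by
  ext s
  simp only [mem_biUnion, mem_filter, mem_inter, mem_nbhd, G.adj_comm s]
  tauto

/-- For every critical independent set `S` there is a matching from `N(S)` into `S`. -/
theorem matching_from_nbhd_of_critIndep (G : SimpleGraph V) [DecidableRel G.Adj]
    (S : Finset V) (hS : IsCritIndep G S) :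
    ∃ f : V → V, Set.InjOn f ↑(nbhd G S) ∧
      ∀ u ∈ nbhd G S, f u ∈ S ∧ G.Adj u (f u) := by
  obtain ⟨f, hf_inj, hf_mem⟩ := Finset.exists_injOn_of_forall_card_le_card_biUnion
    (nbhd G S) (fun u => S.filter (G.Adj u)) fun A hA => by
      rw [biUnion_filter_adj_eq_inter_nbhd]
      exact hS.card_le_card_inter_nbhd hA
  exact ⟨f, hf_inj, fun u hu => mem_filter.mp (hf_mem u hu)⟩

end CritGraph
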